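/- arXiv:1502.06299 — 3 statements merged into one kernel-verified Lean document; each statement's English description precedes it below -/
import Mathlib

section
/- Let z1, z2 be points in the closed unit disk of ℂ and for t ∈ (0,1] define X_t(z) = z/|z| if |z| ≥ t and X_t(z) = 0 if |z| < t. Then ∫₀¹ |X_√t(z1) - X_√t(z2)| dt ≤ (3/2) |z1 - z2| (|z1| + |z2|). -/
/-- The cut-off radial projection `X_t` on the closed unit disk. -/
noncomputable def X (t : ℝ) (z : ℂ) : ℂ := if t ≤ ‖z‖ then z / (‖z‖ : ℂ) else 0

/-! Assume `‖z2‖ ≤ ‖z1‖`. As `t` runs through `(0, 1]`, the integrand equals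
`‖z1/‖z1‖ - z2/‖z2‖‖` up to `‖z2‖²`, then `1` up to `‖z1‖²`, then `0`. The first value is at most
`‖z1 - z2‖ / ‖z2‖`, since shrinking `z1` radially to the circle through `z2` does not increase its
distance to `z2`, and `‖z1‖² - ‖z2‖² ≤ ‖z1 - z2‖ (‖z1‖ + ‖z2‖)`; adding up gives
`‖z1 - z2‖ (‖z1‖ + 2 ‖z2‖) ≤ 3/2 ‖z1 - z2‖ (‖z1‖ + ‖z2‖)`. -/

open Set MeasureTheory

section PiecewiseConstant

variable {f : ℝ → ℝ} {a b c : ℝ}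

lemma intervalIntegrable_of_eqOn_Ioc (hab : a ≤ b) (h : EqOn f (fun _ => c) (Ioc a b)) :
    IntervalIntegrable f volume a b :=
  (intervalIntegrable_congr (by rwa [uIoc_of_le hab])).2 intervalIntegrable_const

lemma integral_of_eqOn_Ioc (hab : a ≤ b) (h : EqOn f (fun _ => c) (Ioc a b)) :
    ∫ x in a..b, f x = (b - a) * c := by
  rw [intervalIntegral.integral_congr_ae (ae_of_all _ (uIoc_of_le hab ▸ h)),
    intervalIntegral.integral_const, smul_eq_mul]

end PiecewiseConstant

lemma norm_mul_norm_inv_smul_sub_le {E : Type*} [NormedAddCommGroup E] [InnerProductSpace ℝ E]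
    {x y : E} (h : ‖y‖ ≤ ‖x‖) : ‖y‖ * ‖‖x‖⁻¹ • x - ‖y‖⁻¹ • y‖ ≤ ‖x - y‖ := by
  rcases eq_or_ne y 0 with rfl | hy
  · simp
  have hy0 : 0 < ‖y‖ := norm_pos_iff.2 hy
  have hx0 : 0 < ‖x‖ := hy0.trans_le h
  set a := ‖y‖ / ‖x‖
  have ha : a ≤ 1 := div_le_one_of_le₀ h hx0.le
  have hax : a * ‖x‖ = ‖y‖ := div_mul_cancel₀ _ hx0.ne'
  have hrw : ‖y‖ * ‖‖x‖⁻¹ • x - ‖y‖⁻¹ • y‖ = ‖a • x - y‖ := by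
    rw [← Real.norm_of_nonneg hy0.le, ← norm_smul, Real.norm_of_nonneg hy0.le, smul_sub,
      smul_smul, smul_smul, mul_inv_cancel₀ hy0.ne', one_smul]
    rfl
  rw [hrw]
  refine pow_le_pow_iff_left₀ (norm_nonneg _) (norm_nonneg _) two_ne_zero |>.1 ?_
  have hinner : inner ℝ x y ≤ ‖x‖ * ‖y‖ := real_inner_le_norm x y
  rw [norm_sub_sq_real, norm_sub_sq_real, norm_smul, real_inner_smul_left, Real.norm_eq_abs,
    abs_of_nonneg (by positivity), hax]
  -- `‖x - y‖² - ‖a • x - y‖² = (1 - a) ((1 + a) ‖x‖² - 2 ⟪x, y⟫) ≥ (1 - a)² ‖x‖²`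
  nlinarith [mul_le_mul_of_nonneg_left hinner (sub_nonneg.2 ha)]

lemma X_sqrt_of_le {t : ℝ} {z : ℂ} (ht : t ≤ ‖z‖ ^ 2) : X (Real.sqrt t) z = z / (‖z‖ : ℂ) :=
  if_pos (Real.sqrt_le_left (norm_nonneg z) |>.2 ht)

lemma X_sqrt_of_lt {t : ℝ} {z : ℂ} (ht : ‖z‖ ^ 2 < t) : X (Real.sqrt t) z = 0 :=
  if_neg (not_le.2 ((Real.lt_sqrt (norm_nonneg z)).2 ht))

lemma integral_norm_X_sqrt_sub_X_sqrt {z w : ℂ} (hz : ‖z‖ ≤ 1) (hwz : ‖w‖ ≤ ‖z‖) :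
    ∫ t in (0 : ℝ)..1, ‖X (Real.sqrt t) z - X (Real.sqrt t) w‖ =
      ‖w‖ ^ 2 * ‖z / (‖z‖ : ℂ) - w / (‖w‖ : ℂ)‖ + (‖z‖ ^ 2 - ‖w‖ ^ 2) := by
  set F : ℝ → ℝ := fun t => ‖X (Real.sqrt t) z - X (Real.sqrt t) w‖
  have hsq : ‖w‖ ^ 2 ≤ ‖z‖ ^ 2 := pow_le_pow_left₀ (norm_nonneg w) hwz 2
  have h0 : (0 : ℝ) ≤ ‖w‖ ^ 2 := sq_nonneg _
  have h1 : ‖z‖ ^ 2 ≤ 1 := pow_le_one₀ (norm_nonneg z) hz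
  have hF₁ : EqOn F (fun _ => ‖z / (‖z‖ : ℂ) - w / (‖w‖ : ℂ)‖) (Ioc 0 (‖w‖ ^ 2)) :=
    fun t ht => by simp only [F, X_sqrt_of_le ht.2, X_sqrt_of_le (ht.2.trans hsq)]
  have hF₂ : EqOn F (fun _ => 1) (Ioc (‖w‖ ^ 2) (‖z‖ ^ 2)) := fun t ht => by
    have hz0 : z ≠ 0 := by rintro rfl; simp at ht
    simp only [F, X_sqrt_of_le ht.2, X_sqrt_of_lt ht.1, sub_zero, norm_div,
      Complex.norm_real, norm_norm, div_self (norm_ne_zero_iff.2 hz0)]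
  have hF₃ : EqOn F (fun _ => 0) (Ioc (‖z‖ ^ 2) 1) := fun t ht => by
    simp only [F, X_sqrt_of_lt ht.1, X_sqrt_of_lt (hsq.trans_lt ht.1), sub_zero, norm_zero]
  have hI₁ := intervalIntegrable_of_eqOn_Ioc h0 hF₁
  have hI₂ := intervalIntegrable_of_eqOn_Ioc hsq hF₂
  have hI₃ := intervalIntegrable_of_eqOn_Ioc h1 hF₃
  rw [← intervalIntegral.integral_add_adjacent_intervals (hI₁.trans hI₂) hI₃,
    ← intervalIntegral.integral_add_adjacent_intervals hI₁ hI₂, integral_of_eqOn_Ioc h0 hF₁,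
    integral_of_eqOn_Ioc hsq hF₂, integral_of_eqOn_Ioc h1 hF₃]
  ring

lemma norm_mul_norm_div_sub_le {z w : ℂ} (hwz : ‖w‖ ≤ ‖z‖) :
    ‖w‖ * ‖z / (‖z‖ : ℂ) - w / (‖w‖ : ℂ)‖ ≤ ‖z - w‖ := by
  simpa only [Complex.real_smul, Complex.ofReal_inv, inv_mul_eq_div] using
    norm_mul_norm_inv_smul_sub_le hwz

lemma integral_norm_X_sqrt_sub_X_sqrt_le {z w : ℂ} (hz : ‖z‖ ≤ 1) (hwz : ‖w‖ ≤ ‖z‖) :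
    ∫ t in (0 : ℝ)..1, ‖X (Real.sqrt t) z - X (Real.sqrt t) w‖ ≤
      3 / 2 * ‖z - w‖ * (‖z‖ + ‖w‖) := by
  rw [integral_norm_X_sqrt_sub_X_sqrt hz hwz]
  have hw : ‖w‖ ^ 2 * ‖z / (‖z‖ : ℂ) - w / (‖w‖ : ℂ)‖ ≤ ‖w‖ * ‖z - w‖ := by
    rw [sq, mul_assoc]
    exact mul_le_mul_of_nonneg_left (norm_mul_norm_div_sub_le hwz) (norm_nonneg w)
  have hzw : ‖z‖ ^ 2 - ‖w‖ ^ 2 ≤ ‖z - w‖ * (‖z‖ + ‖w‖) := by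
    rw [sq_sub_sq, mul_comm ‖z - w‖]
    exact mul_le_mul_of_nonneg_left (norm_sub_norm_le z w) (by positivity)
  nlinarith [mul_nonneg (norm_nonneg (z - w)) (sub_nonneg.2 hwz)]

theorem stmt_2 (z1 z2 : ℂ) (h1 : ‖z1‖ ≤ 1) (h2 : ‖z2‖ ≤ 1) :
    (∫ t in (0:ℝ)..1, ‖X (Real.sqrt t) z1 - X (Real.sqrt t) z2‖) ≤
      3 / 2 * ‖z1 - z2‖ * (‖z1‖ + ‖z2‖) := by
  rcases le_total ‖z2‖ ‖z1‖ with h | h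
  · exact integral_norm_X_sqrt_sub_X_sqrt_le h1 h
  · simp_rw [norm_sub_rev (X _ z1), norm_sub_rev z1, add_comm ‖z1‖]
    exact integral_norm_X_sqrt_sub_X_sqrt_le h2 h
end

section
/- Let k ∈ ℕ, ξ = e^{2πi/k}, and for θ ∈ [0,2π), t ∈ (0,1], define Y_{t,θ}(z) = ξ^j if z lies in the sector Q_j^θ = { re^{iα} : 0 < r ≤ 1, θ + 2πj/k ≤ α < θ + 2π(j+1)/k } and |z| ≥ t, and Y_{t,θ}(z) = 0 if |z| < t. Then for any z1, z2 in the closed unit disk, (1/2π) ∫₀^{2π} ∫₀¹ |Y_{√t,θ}(z1) - Y_{√t,θ}(z2)| dt dθ ≤ 2 |z1 - z2| (|z1| + |z2|). -/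
/-
Write `r₁ ≤ r₂` for the moduli and `δ = arg z₁ - arg z₂`. With `s = √t`, for `t ≤ r₁²` both values
are `k`-th roots of unity, for `r₁² < t ≤ r₂²` only the second one is, and afterwards both vanish,
so the inner integral is `r₁² ‖ξ^{j₁} - ξ^{j₂}‖ + (r₂² - r₁²)`. As `θ` runs over a period, the
difference of the sector indices is `⌊a⌋` or `⌊a⌋ + 1`, `a = kδ / 2π`, with frequencies
`1 - fract a` and `fract a`; since `‖ξ^j - 1‖ = 2 |sin (π j / k)|` and `|sin (π x / k)|` is concave
between consecutive integers, the mean of `‖ξ^{j₁} - ξ^{j₂}‖` is at most `2 |sin (δ / 2)|`. The law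
of cosines `‖z₁ - z₂‖² = (r₁ - r₂)² + 4 r₁ r₂ sin² (δ / 2)` bounds `2 r₁ |sin (δ / 2)|` by
`‖z₁ - z₂‖`, and `r₂² - r₁² ≤ ‖z₁ - z₂‖ (r₁ + r₂)`.
-/

/-- The random `k`-partition function `Y_{t,θ}` on the closed unit disk:
`Y t θ z = ξ^j` if `|z| ≥ t` and `z` lies in the sector `Q_j^θ`
(i.e. `θ + 2πj/k ≤ arg z < θ + 2π(j+1)/k` mod `2π`), and `0` if `|z| < t`. -/
noncomputable def Y (k : ℕ) (t θ : ℝ) (z : ℂ) : ℂ :=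
  if ‖z‖ < t then 0
  else Complex.exp (2 * Real.pi * Complex.I / k) ^
    ⌊(k : ℝ) * Int.fract ((Complex.arg z - θ) / (2 * Real.pi))⌋

open Real MeasureTheory intervalIntegral Set
open scoped Interval
open Complex (I arg)

noncomputable def xi (k : ℕ) : ℂ := Complex.exp (2 * π * I / k)

lemma xi_zpow (k : ℕ) (n : ℤ) : xi k ^ n = Complex.exp (I * ↑(2 * π * n / k)) := by
  rw [xi, ← Complex.exp_int_mul]
  push_cast
  ring_nf

lemma norm_xi_zpow (k : ℕ) (n : ℤ) : ‖xi k ^ n‖ = 1 := by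
  rw [xi_zpow, Complex.norm_exp_I_mul_ofReal]

lemma xi_pow_self (k : ℕ) : xi k ^ k = 1 := by
  rcases eq_or_ne k 0 with rfl | hk
  · rfl
  · exact (Complex.isPrimitiveRoot_exp k hk).pow_eq_one

lemma xi_zpow_floor_mul_fract (k : ℕ) (x : ℝ) :
    xi k ^ ⌊k * Int.fract x⌋ = xi k ^ ⌊k * x⌋ := by
  rw [Int.fract, mul_sub, show (k : ℝ) * ⌊x⌋ = ((k * ⌊x⌋ : ℤ) : ℝ) by push_cast; rfl,
    Int.floor_sub_intCast, zpow_sub₀ (by simp [xi]), zpow_mul, zpow_natCast, xi_pow_self,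
    one_zpow, div_one]

lemma norm_xi_zpow_sub_one (k : ℕ) (n : ℤ) : ‖xi k ^ n - 1‖ = 2 * |sin (π * n / k)| := by
  rw [xi_zpow, Complex.norm_exp_I_mul_ofReal_sub_one, norm_mul, Real.norm_two, Real.norm_eq_abs]
  ring_nf

lemma norm_xi_zpow_sub_xi_zpow (k : ℕ) (m n : ℤ) :
    ‖xi k ^ m - xi k ^ n‖ = ‖xi k ^ (m - n) - 1‖ := by
  rw [← mul_one ‖xi k ^ (m - n) - 1‖, ← norm_xi_zpow k n, ← norm_mul, sub_mul, one_mul,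
    ← zpow_add₀ (by simp [xi]), sub_add_cancel]

lemma abs_sin_add_int_mul_pi (x : ℝ) (q : ℤ) : |sin (x + q * π)| = |sin x| := by
  rw [sin_add_int_mul_pi, abs_mul, abs_neg_one_zpow, one_mul]

/-- Concavity of `sin` on `[0, π]`, after reducing `n` modulo `k`. -/
lemma abs_sin_chord_le {k : ℕ} (hk : k ≠ 0) (n : ℤ) {f : ℝ} (hf0 : 0 ≤ f) (hf1 : f ≤ 1) :
    (1 - f) * |sin (π * n / k)| + f * |sin (π * (n + 1) / k)| ≤ |sin (π * (n + f) / k)| := by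
  obtain ⟨q, r, hr0, hrk, rfl⟩ : ∃ q r : ℤ, 0 ≤ r ∧ r < k ∧ n = r + k * q :=
    ⟨n / k, n % k, Int.emod_nonneg n (by omega), Int.emod_lt_of_pos n (by omega),
      (Int.emod_add_mul_ediv n k).symm⟩
  have hkR : (0 : ℝ) < k := by positivity
  have hrk' : (r : ℝ) + 1 ≤ k := by exact_mod_cast hrk
  have hr0' : (0 : ℝ) ≤ r := by exact_mod_cast hr0
  have reduce : ∀ x : ℝ, 0 ≤ x → x ≤ 1 →
      |sin (π * (↑(r + k * q) + x) / k)| = sin (π * (r + x) / k) := fun x hx0 hx1 => by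
    rw [show π * (↑(r + k * q) + x) / k = π * (r + x) / k + q * π by push_cast; field_simp; ring,
      abs_sin_add_int_mul_pi, abs_of_nonneg]
    apply sin_nonneg_of_nonneg_of_le_pi (by positivity)
    rw [div_le_iff₀ hkR]
    nlinarith [pi_pos]
  have h0 := reduce 0 le_rfl zero_le_one
  simp only [add_zero] at h0
  rw [h0, reduce 1 zero_le_one le_rfl, reduce f hf0 hf1]
  have mem : ∀ x : ℝ, 0 ≤ x → x ≤ 1 → π * (r + x) / k ∈ Icc 0 π := fun x hx0 hx1 =>
    ⟨by positivity, by rw [div_le_iff₀ hkR]; nlinarith [pi_pos]⟩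
  have hcc := strictConcaveOn_sin_Icc.concaveOn.2 (mem 0 le_rfl zero_le_one)
    (mem 1 zero_le_one le_rfl) (sub_nonneg.2 hf1) hf0 (sub_add_cancel 1 f)
  simp only [smul_eq_mul, add_zero] at hcc
  rwa [show (1 - f) * (π * r / k) + f * (π * (r + 1) / k) = π * (r + f) / k by ring] at hcc

section StepFunctions

variable {E : Type*} [NormedAddCommGroup E] {f : ℝ → E} {a b : ℝ} {c : E}

lemma IntervalIntegrable.of_eqOn_const (h : EqOn f (fun _ => c) (Ι a b)) :
    IntervalIntegrable f volume a b :=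
  (intervalIntegrable_congr h).2 intervalIntegrable_const

lemma IntervalIntegrable.of_bound (hf : AEStronglyMeasurable f volume) (C : ℝ)
    (hC : ∀ x, ‖f x‖ ≤ C) (a b : ℝ) : IntervalIntegrable f volume a b :=
  intervalIntegrable_iff.2 <|
    IntegrableOn.of_bound measure_Ioc_lt_top hf.restrict C (ae_of_all _ hC)

lemma periodic_floor_sub_sub_floor_sub {α : Type*} (G : ℤ → α) (φ₁ φ₂ : ℝ) :
    Function.Periodic (fun u => G (⌊φ₁ - u⌋ - ⌊φ₂ - u⌋)) 1 := fun u => by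
  simp only [sub_add_eq_sub_sub, Int.floor_sub_one, sub_sub_sub_cancel_right]

section Integral

variable [NormedSpace ℝ E] [CompleteSpace E]

lemma integral_of_eqOn_const (h : EqOn f (fun _ => c) (Ι a b)) :
    ∫ x in a..b, f x = (b - a) • c := by
  rw [integral_congr_ae (ae_of_all _ h), intervalIntegral.integral_const]

lemma integral_comp_floor_sub (G : ℤ → E) (a : ℝ) :
    ∫ s in (0 : ℝ)..1, G ⌊a - s⌋ = Int.fract a • G ⌊a⌋ + (1 - Int.fract a) • G (⌊a⌋ - 1) := by
  have ha := Int.floor_add_fract a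
  have hf0 := Int.fract_nonneg a
  have hf1 := Int.fract_lt_one a
  have h₁ : EqOn (fun s => G ⌊a - s⌋) (fun _ => G ⌊a⌋) (Ι 0 (Int.fract a)) := by
    intro s hs
    rw [uIoc_of_le hf0] at hs
    have : ⌊a - s⌋ = ⌊a⌋ := Int.floor_eq_iff.2 ⟨by linarith [hs.2], by linarith [hs.1]⟩
    simp only [this]
  have h₂ : EqOn (fun s => G ⌊a - s⌋) (fun _ => G (⌊a⌋ - 1)) (Ι (Int.fract a) 1) := by
    intro s hs
    rw [uIoc_of_le hf1.le] at hs
    have : ⌊a - s⌋ = ⌊a⌋ - 1 :=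
      Int.floor_eq_iff.2 (by push_cast; constructor <;> linarith [hs.1, hs.2])
    simp only [this]
  rw [← integral_add_adjacent_intervals (.of_eqOn_const h₁) (.of_eqOn_const h₂),
    integral_of_eqOn_const h₁, integral_of_eqOn_const h₂, sub_zero]

lemma integral_comp_floor_sub_sub_floor_sub (G : ℤ → E) (φ₁ φ₂ : ℝ) :
    ∫ u in (0 : ℝ)..1, G (⌊φ₁ - u⌋ - ⌊φ₂ - u⌋) =
      (1 - Int.fract (φ₁ - φ₂)) • G ⌊φ₁ - φ₂⌋ + Int.fract (φ₁ - φ₂) • G (⌊φ₁ - φ₂⌋ + 1) := by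
  have hshift : EqOn (fun s => G (⌊φ₁ - (φ₂ + s)⌋ - ⌊φ₂ - (φ₂ + s)⌋))
      (fun s => G (⌊φ₁ - φ₂ - s⌋ + 1)) (Ι 0 1) := by
    intro s hs
    rw [uIoc_of_le zero_le_one] at hs
    have : ⌊-s⌋ = -1 := Int.floor_eq_iff.2 (by push_cast; constructor <;> linarith [hs.1, hs.2])
    simp only [sub_add_eq_sub_sub, sub_self, zero_sub, this, sub_neg_eq_add]
  calc ∫ u in (0 : ℝ)..1, G (⌊φ₁ - u⌋ - ⌊φ₂ - u⌋)
      = ∫ u in φ₂..φ₂ + 1, G (⌊φ₁ - u⌋ - ⌊φ₂ - u⌋) := by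
        simpa using (periodic_floor_sub_sub_floor_sub G φ₁ φ₂).intervalIntegral_add_eq 0 φ₂
    _ = ∫ s in (0 : ℝ)..1, G (⌊φ₁ - (φ₂ + s)⌋ - ⌊φ₂ - (φ₂ + s)⌋) := by
        rw [integral_comp_add_left (fun u => G (⌊φ₁ - u⌋ - ⌊φ₂ - u⌋)) φ₂, add_zero]
    _ = _ := by
        rw [integral_congr_ae (ae_of_all _ hshift),
          integral_comp_floor_sub (fun j => G (j + 1)), sub_add_cancel, add_comm]

end Integral

lemma integral_norm_ite_sub_ite {A B : ℝ} (hA : 0 ≤ A) (hAB : A ≤ B) (hB : B ≤ 1) (w₁ w₂ : E) :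
    ∫ t in (0 : ℝ)..1, ‖(if A < t then 0 else w₁) - (if B < t then 0 else w₂)‖ =
      A * ‖w₁ - w₂‖ + (B - A) * ‖w₂‖ := by
  set g := fun t : ℝ => ‖(if A < t then 0 else w₁) - (if B < t then 0 else w₂)‖
  have h₁ : EqOn g (fun _ => ‖w₁ - w₂‖) (Ι 0 A) := fun t ht => by
    rw [uIoc_of_le hA] at ht
    simp only [g, if_neg (not_lt.2 ht.2), if_neg (not_lt.2 (ht.2.trans hAB))]
  have h₂ : EqOn g (fun _ => ‖w₂‖) (Ι A B) := fun t ht => by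
    rw [uIoc_of_le hAB] at ht
    simp only [g, if_pos ht.1, if_neg (not_lt.2 ht.2), zero_sub, norm_neg]
  have h₃ : EqOn g (fun _ => 0) (Ι B 1) := fun t ht => by
    rw [uIoc_of_le hB] at ht
    simp only [g, if_pos (hAB.trans_lt ht.1), if_pos ht.1, sub_self, norm_zero]
  have i₁ := IntervalIntegrable.of_eqOn_const h₁
  have i₂ := IntervalIntegrable.of_eqOn_const h₂
  rw [← integral_add_adjacent_intervals (i₁.trans i₂) (.of_eqOn_const h₃),
    ← integral_add_adjacent_intervals i₁ i₂, integral_of_eqOn_const h₁,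
    integral_of_eqOn_const h₂, integral_of_eqOn_const h₃]
  simp only [smul_eq_mul, sub_zero, mul_zero, add_zero]

end StepFunctions

lemma cos_eq_one_sub_two_mul_sin_half_sq (x : ℝ) : cos x = 1 - 2 * sin (x / 2) ^ 2 := by
  have := cos_sq (x / 2)
  rw [mul_div_cancel₀ x two_ne_zero] at this
  linarith [sin_sq_add_cos_sq (x / 2)]

lemma norm_sub_sq_eq (z w : ℂ) :
    ‖z - w‖ ^ 2 = (‖z‖ - ‖w‖) ^ 2 + 4 * ‖z‖ * ‖w‖ * sin ((arg z - arg w) / 2) ^ 2 := by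
  rw [Complex.sq_norm, Complex.normSq_apply, Complex.sub_re, Complex.sub_im,
    ← Complex.norm_mul_cos_arg z, ← Complex.norm_mul_cos_arg w, ← Complex.norm_mul_sin_arg z,
    ← Complex.norm_mul_sin_arg w]
  linear_combination ‖z‖ ^ 2 * sin_sq_add_cos_sq (arg z) + ‖w‖ ^ 2 * sin_sq_add_cos_sq (arg w)
    - 2 * ‖z‖ * ‖w‖ * (cos_sub (arg z) (arg w)).symm.trans (cos_eq_one_sub_two_mul_sin_half_sq _)

lemma two_mul_norm_mul_abs_sin_le {z w : ℂ} (h : ‖z‖ ≤ ‖w‖) :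
    2 * ‖z‖ * |sin ((arg z - arg w) / 2)| ≤ ‖z - w‖ := by
  apply le_of_pow_le_pow_left₀ two_ne_zero (norm_nonneg _)
  rw [norm_sub_sq_eq, mul_pow, mul_pow, sq_abs]
  nlinarith [sq_nonneg (‖z‖ - ‖w‖), mul_nonneg (mul_nonneg (sub_nonneg.2 h) (norm_nonneg z))
    (sq_nonneg (sin ((arg z - arg w) / 2)))]

/-- `z ∈ Q_j^θ` exactly when `sectorIndex k θ (arg z) ≡ j [ZMOD k]`. -/
noncomputable def sectorIndex (k : ℕ) (θ α : ℝ) : ℤ := ⌊k * ((α - θ) / (2 * π))⌋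

lemma Y_sqrt (k : ℕ) (t θ : ℝ) (z : ℂ) :
    Y k (√t) θ z = if ‖z‖ ^ 2 < t then 0 else xi k ^ sectorIndex k θ (arg z) := by
  simp only [Y, Real.lt_sqrt (norm_nonneg z)]
  rw [sectorIndex, ← xi_zpow_floor_mul_fract]
  rfl

lemma sectorIndex_eq (k : ℕ) (θ α : ℝ) :
    sectorIndex k θ α = ⌊k / (2 * π) * α - k / (2 * π) * θ⌋ := by
  rw [sectorIndex]
  ring_nf

lemma measurable_xi_zpow_sectorIndex (k : ℕ) (α : ℝ) :
    Measurable fun θ => xi k ^ sectorIndex k θ α :=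
  (Measurable.of_discrete (f := fun n : ℤ => xi k ^ n)).comp (Measurable.floor (by fun_prop))

lemma norm_xi_zpow_sub_xi_zpow_le (k : ℕ) (m n : ℤ) : ‖xi k ^ m - xi k ^ n‖ ≤ 2 :=
  (norm_sub_le _ _).trans (by rw [norm_xi_zpow, norm_xi_zpow]; norm_num)

lemma intervalIntegrable_norm_xi_zpow_sectorIndex_sub (k : ℕ) (α₁ α₂ a b : ℝ) :
    IntervalIntegrable (fun θ => ‖xi k ^ sectorIndex k θ α₁ - xi k ^ sectorIndex k θ α₂‖)
      volume a b :=
  .of_bound ((measurable_xi_zpow_sectorIndex k α₁).sub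
    (measurable_xi_zpow_sectorIndex k α₂)).norm.aestronglyMeasurable
    2 (fun θ => by rw [norm_norm]; exact norm_xi_zpow_sub_xi_zpow_le ..) a b

lemma integral_norm_xi_zpow_sectorIndex_sub_le {k : ℕ} (hk : k ≠ 0) (α₁ α₂ : ℝ) :
    ∫ θ in (0 : ℝ)..2 * π, ‖xi k ^ sectorIndex k θ α₁ - xi k ^ sectorIndex k θ α₂‖ ≤
      2 * π * (2 * |sin ((α₁ - α₂) / 2)|) := by
  set c : ℝ := k / (2 * π) with hc_def
  have hc : c ≠ 0 := by positivity
  set G : ℤ → ℝ := fun j => ‖xi k ^ j - 1‖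
  have hG : ∀ θ, ‖xi k ^ sectorIndex k θ α₁ - xi k ^ sectorIndex k θ α₂‖ =
      G (⌊c * α₁ - c * θ⌋ - ⌊c * α₂ - c * θ⌋) := fun θ => by
    rw [sectorIndex_eq, sectorIndex_eq, norm_xi_zpow_sub_xi_zpow]
  have hint : ∀ a b, IntervalIntegrable (fun u => G (⌊c * α₁ - u⌋ - ⌊c * α₂ - u⌋)) volume a b :=
    .of_bound ((Measurable.of_discrete (f := G)).comp (by fun_prop)).aestronglyMeasurable 2
      (fun _ => by simpa [G] using norm_xi_zpow_sub_xi_zpow_le k _ 0)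
  have hper := (periodic_floor_sub_sub_floor_sub G (c * α₁) (c * α₂)).intervalIntegral_add_zsmul_eq
    k 0 hint
  simp only [zero_add, zsmul_eq_mul, mul_one, Int.cast_natCast] at hper
  calc ∫ θ in (0 : ℝ)..2 * π, ‖xi k ^ sectorIndex k θ α₁ - xi k ^ sectorIndex k θ α₂‖
      = ∫ θ in (0 : ℝ)..2 * π, G (⌊c * α₁ - c * θ⌋ - ⌊c * α₂ - c * θ⌋) := by simp only [hG]
    _ = 2 * π * ∫ u in (0 : ℝ)..1, G (⌊c * α₁ - u⌋ - ⌊c * α₂ - u⌋) := by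
      rw [integral_comp_mul_left (fun u => G (⌊c * α₁ - u⌋ - ⌊c * α₂ - u⌋)) hc, mul_zero,
        show c * (2 * π) = k by rw [hc_def]; field_simp, hper, smul_eq_mul, hc_def]
      field_simp
    _ ≤ 2 * π * (2 * |sin ((α₁ - α₂) / 2)|) := by
      gcongr
      have hchord := abs_sin_chord_le hk ⌊c * α₁ - c * α₂⌋ (Int.fract_nonneg (c * α₁ - c * α₂))
        (Int.fract_lt_one _).le
      rw [Int.floor_add_fract, show π * (c * α₁ - c * α₂) / k = (α₁ - α₂) / 2 by
        rw [hc_def]; field_simp] at hchord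
      rw [integral_comp_floor_sub_sub_floor_sub]
      simp only [G, smul_eq_mul, norm_xi_zpow_sub_one, Int.cast_add, Int.cast_one]
      linarith

lemma norm_mul_integral_norm_xi_zpow_sectorIndex_sub_le {k : ℕ} (hk : k ≠ 0) {z₁ z₂ : ℂ}
    (h : ‖z₁‖ ≤ ‖z₂‖) :
    ‖z₁‖ * ∫ θ in (0 : ℝ)..2 * π,
        ‖xi k ^ sectorIndex k θ (arg z₁) - xi k ^ sectorIndex k θ (arg z₂)‖ ≤
      2 * π * ‖z₁ - z₂‖ :=
  calc _ ≤ ‖z₁‖ * (2 * π * (2 * |sin ((arg z₁ - arg z₂) / 2)|)) := by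
        gcongr
        exact integral_norm_xi_zpow_sectorIndex_sub_le hk _ _
    _ = 2 * π * (2 * ‖z₁‖ * |sin ((arg z₁ - arg z₂) / 2)|) := by ring
    _ ≤ 2 * π * ‖z₁ - z₂‖ := by
        gcongr
        exact two_mul_norm_mul_abs_sin_le h

lemma integral_norm_Y_sqrt_sub (k : ℕ) (θ : ℝ) {z₁ z₂ : ℂ} (h₁₂ : ‖z₁‖ ≤ ‖z₂‖) (h₂ : ‖z₂‖ ≤ 1) :
    ∫ t in (0 : ℝ)..1, ‖Y k (√t) θ z₁ - Y k (√t) θ z₂‖ =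
      ‖z₁‖ ^ 2 * ‖xi k ^ sectorIndex k θ (arg z₁) - xi k ^ sectorIndex k θ (arg z₂)‖ +
        (‖z₂‖ ^ 2 - ‖z₁‖ ^ 2) := by
  simp only [Y_sqrt]
  rw [integral_norm_ite_sub_ite (by positivity) (by gcongr) (pow_le_one₀ (norm_nonneg _) h₂),
    norm_xi_zpow, mul_one]

theorem stmt_4 (k : ℕ) (hk : 1 ≤ k) (z1 z2 : ℂ) (h1 : ‖z1‖ ≤ 1) (h2 : ‖z2‖ ≤ 1) :
    (1 / (2 * Real.pi)) *
        ∫ θ in (0:ℝ)..(2 * Real.pi), ∫ t in (0:ℝ)..1,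
          ‖Y k (Real.sqrt t) θ z1 - Y k (Real.sqrt t) θ z2‖ ≤
      2 * ‖z1 - z2‖ * (‖z1‖ + ‖z2‖) := by
  wlog h12 : ‖z1‖ ≤ ‖z2‖ generalizing z1 z2
  · simpa only [norm_sub_rev z2 z1, norm_sub_rev (Y k _ _ z2), add_comm ‖z2‖] using
      this z2 z1 h2 h1 (le_of_not_ge h12)
  rw [integral_congr fun θ _ => integral_norm_Y_sqrt_sub k θ h12 h2,
    integral_add ((intervalIntegrable_norm_xi_zpow_sectorIndex_sub ..).const_mul _)
      intervalIntegrable_const, intervalIntegral.integral_const_mul,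
    intervalIntegral.integral_const, sub_zero, smul_eq_mul]
  have hangle := norm_mul_integral_norm_xi_zpow_sectorIndex_sub_le (k := k) (by omega) h12
  have hradial : ‖z2‖ ^ 2 - ‖z1‖ ^ 2 ≤ ‖z1 - z2‖ * (‖z1‖ + ‖z2‖) := by
    rw [sq_sub_sq, mul_comm, add_comm]
    gcongr
    simpa only [norm_sub_rev z2 z1] using norm_sub_norm_le z2 z1
  set I := ∫ θ in (0 : ℝ)..2 * π,
    ‖xi k ^ sectorIndex k θ (arg z1) - xi k ^ sectorIndex k θ (arg z2)‖
  calc 1 / (2 * π) * (‖z1‖ ^ 2 * I + 2 * π * (‖z2‖ ^ 2 - ‖z1‖ ^ 2))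
      = ‖z1‖ * (‖z1‖ * I / (2 * π)) + (‖z2‖ ^ 2 - ‖z1‖ ^ 2) := by field_simp
    _ ≤ ‖z1‖ * ‖z1 - z2‖ + ‖z1 - z2‖ * (‖z1‖ + ‖z2‖) := by
      gcongr
      rwa [div_le_iff₀ (by positivity), mul_comm ‖z1 - z2‖]
    _ ≤ 2 * ‖z1 - z2‖ * (‖z1‖ + ‖z2‖) := by nlinarith [norm_nonneg z2, norm_nonneg (z1 - z2)]
end

section
/- Spreading lemma: let (V,μ) be a finite measure space and f1,…,fn : V → ℂ orthonormal in L²(μ). Set F = (f1,…,fn), μ_F(A) = Σ_{u∈A} ||F(u)||² μ(u), and the pseudometric d_F(u,v) = min_{γ∈U(1)} || F(u)/||F(u)|| − γ F(v)/||F(v)|| || on {F ≠ 0}. If S ⊆ V satisfies diam(S ∩ {F≠0}, d_F) ≤ r for some r ∈ (0,1), then μ_F(S) ≤ μ_F(V) / (n(1 − r²)). -/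
/-!
Pick `u₀ ∈ S` with `F u₀ ≠ 0` and let `x = F u₀ / ‖F u₀‖`. Orthonormality of the coordinates of `F`
makes `x ↦ (u ↦ ⟪x, F u⟫)` an isometry into `L²(μ)`, so `∑ᵤ |⟪x, F u⟫|² μ u = ‖x‖² = 1`; testing
it on the standard basis gives `μ_F(V) = n`. Since `‖x - γ y‖² ≥ 2 - 2 |⟪x, y⟫|` for unit
vectors and unimodular `γ`, the bound `d_F(u₀, u) ≤ r` forces `|⟪x, F u⟫| ≥ (1 - r²/2) ‖F u‖`,
hence `|⟪x, F u⟫|² ≥ (1 - r²) ‖F u‖²`. Summing over `S` gives `(1 - r²) μ_F(S) ≤ 1 = μ_F(V) / n`.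
-/

open Finset
open scoped InnerProductSpace ComplexConjugate

noncomputable def phaseDist (𝕜 : Type*) {E : Type*} [RCLike 𝕜] [NormedAddCommGroup E] [Module 𝕜 E]
    (x y : E) : ℝ :=
  sInf {d : ℝ | ∃ γ : 𝕜, ‖γ‖ = 1 ∧ d = ‖x - γ • y‖}

section PhaseDist

variable {𝕜 E : Type*} [RCLike 𝕜] [NormedAddCommGroup E] [InnerProductSpace 𝕜 E]

lemma two_sub_two_mul_norm_inner_le_norm_sub_smul_sq {x y : E} (hx : ‖x‖ = 1) (hy : ‖y‖ = 1)
    {γ : 𝕜} (hγ : ‖γ‖ = 1) : 2 - 2 * ‖⟪x, y⟫_𝕜‖ ≤ ‖x - γ • y‖ ^ 2 := by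
  have hre : RCLike.re ⟪x, γ • y⟫_𝕜 ≤ ‖⟪x, y⟫_𝕜‖ := by
    calc RCLike.re ⟪x, γ • y⟫_𝕜 ≤ ‖⟪x, γ • y⟫_𝕜‖ := RCLike.re_le_norm _
      _ = ‖⟪x, y⟫_𝕜‖ := by rw [inner_smul_right, norm_mul, hγ, one_mul]
  rw [@norm_sub_sq 𝕜, norm_smul, hγ, hx, hy]
  linarith

lemma sqrt_two_sub_two_mul_norm_inner_le_phaseDist {x y : E} (hx : ‖x‖ = 1) (hy : ‖y‖ = 1) :
    √(2 - 2 * ‖⟪x, y⟫_𝕜‖) ≤ phaseDist 𝕜 x y := by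
  refine le_csInf ⟨_, 1, norm_one, rfl⟩ ?_
  rintro _ ⟨γ, hγ, rfl⟩
  rw [Real.sqrt_le_left (norm_nonneg _)]
  exact two_sub_two_mul_norm_inner_le_norm_sub_smul_sq hx hy hγ

lemma one_sub_sq_le_norm_inner_sq_of_phaseDist_le {x y : E} (hx : ‖x‖ = 1) (hy : ‖y‖ = 1)
    {r : ℝ} (hr : phaseDist 𝕜 x y ≤ r) : 1 - r ^ 2 ≤ ‖⟪x, y⟫_𝕜‖ ^ 2 := by
  have h := (sqrt_two_sub_two_mul_norm_inner_le_phaseDist hx hy).trans hr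
  rw [Real.sqrt_le_iff] at h
  nlinarith [norm_nonneg ⟪x, y⟫_𝕜]

lemma one_sub_sq_mul_norm_sq_le_norm_inner_sq {x v : E} (hx : ‖x‖ = 1) (hv : v ≠ 0) {r : ℝ}
    (hr : phaseDist 𝕜 x ((‖v‖ : 𝕜)⁻¹ • v) ≤ r) : (1 - r ^ 2) * ‖v‖ ^ 2 ≤ ‖⟪x, v⟫_𝕜‖ ^ 2 := by
  have h := one_sub_sq_le_norm_inner_sq_of_phaseDist_le hx (norm_smul_inv_norm hv) hr
  have hinner : ‖⟪x, v⟫_𝕜‖ = ‖v‖ * ‖⟪x, (‖v‖ : 𝕜)⁻¹ • v⟫_𝕜‖ := by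
    rw [inner_smul_right, norm_mul, norm_inv, RCLike.norm_coe_norm,
      mul_inv_cancel_left₀ (norm_ne_zero_iff.mpr hv)]
  rw [hinner, mul_pow]
  nlinarith [sq_nonneg ‖v‖]

end PhaseDist

def IsOrthonormalCoordinates {𝕜 V ι : Type*} [RCLike 𝕜] [Fintype V] [DecidableEq ι]
    (μ : V → ℝ) (F : V → EuclideanSpace 𝕜 ι) : Prop :=
  ∀ i j, ∑ u, F u i * conj (F u j) * (μ u : 𝕜) = if i = j then 1 else 0

section Orthonormal

variable {𝕜 V ι : Type*} [RCLike 𝕜] [Fintype V] [Fintype ι] [DecidableEq ι]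
  {μ : V → ℝ} {F : V → EuclideanSpace 𝕜 ι}

lemma IsOrthonormalCoordinates.sum_norm_inner_sq_mul (hF : IsOrthonormalCoordinates μ F)
    (x : EuclideanSpace 𝕜 ι) : ∑ u, ‖⟪x, F u⟫_𝕜‖ ^ 2 * μ u = ‖x‖ ^ 2 := by
  apply RCLike.ofReal_injective (K := 𝕜)
  push_cast
  calc ∑ u, (‖⟪x, F u⟫_𝕜‖ : 𝕜) ^ 2 * μ u
      = ∑ u, ⟪x, F u⟫_𝕜 * conj ⟪x, F u⟫_𝕜 * μ u := by simp_rw [RCLike.mul_conj]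
    _ = ∑ u, ∑ i, ∑ j, conj (x i) * x j * (F u i * conj (F u j) * μ u) := by
      simp only [PiLp.inner_apply, RCLike.inner_apply, map_sum, map_mul, RCLike.conj_conj,
        sum_mul_sum]
      simp only [sum_mul]
      exact sum_congr rfl fun u _ => sum_congr rfl fun i _ => sum_congr rfl fun j _ => by ring
    _ = ∑ i, ∑ j, conj (x i) * x j * ∑ u, F u i * conj (F u j) * μ u := by
      rw [sum_comm]
      simp_rw [mul_sum]
      exact sum_congr rfl fun i _ => sum_comm
    _ = ∑ i, conj (x i) * x i := by simp [hF _ _]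
    _ = (‖x‖ : 𝕜) ^ 2 := by
      simp_rw [RCLike.conj_mul]
      norm_cast
      rw [EuclideanSpace.norm_sq_eq]

lemma IsOrthonormalCoordinates.sum_norm_sq_mul (hF : IsOrthonormalCoordinates μ F) :
    ∑ u, ‖F u‖ ^ 2 * μ u = Fintype.card ι :=
  calc ∑ u, ‖F u‖ ^ 2 * μ u
      = ∑ i, ∑ u, ‖⟪EuclideanSpace.single i (1 : 𝕜), F u⟫_𝕜‖ ^ 2 * μ u := by
        simp only [EuclideanSpace.norm_sq_eq, EuclideanSpace.inner_single_left, map_one,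
          one_mul, sum_mul]
        exact sum_comm
    _ = Fintype.card ι := by simp [hF.sum_norm_inner_sq_mul]

lemma IsOrthonormalCoordinates.one_sub_sq_mul_sum_norm_sq_mul_le_one
    (hF : IsOrthonormalCoordinates μ F) (hμ : ∀ u, 0 ≤ μ u) {S : Finset V} {r : ℝ}
    (hS : ∀ u ∈ S, ∀ v ∈ S, F u ≠ 0 → F v ≠ 0 →
      phaseDist 𝕜 ((‖F u‖ : 𝕜)⁻¹ • F u) ((‖F v‖ : 𝕜)⁻¹ • F v) ≤ r) :
    (1 - r ^ 2) * ∑ u ∈ S, ‖F u‖ ^ 2 * μ u ≤ 1 := by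
  by_cases hS₀ : ∃ u₀ ∈ S, F u₀ ≠ 0
  · obtain ⟨u₀, hu₀S, hu₀⟩ := hS₀
    set x := (‖F u₀‖ : 𝕜)⁻¹ • F u₀
    have hx : ‖x‖ = 1 := norm_smul_inv_norm hu₀
    calc (1 - r ^ 2) * ∑ u ∈ S, ‖F u‖ ^ 2 * μ u
        = ∑ u ∈ S, (1 - r ^ 2) * ‖F u‖ ^ 2 * μ u := by simp only [mul_sum, mul_assoc]
      _ ≤ ∑ u ∈ S, ‖⟪x, F u⟫_𝕜‖ ^ 2 * μ u := by
        refine sum_le_sum fun u hu => mul_le_mul_of_nonneg_right ?_ (hμ u)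
        by_cases hFu : F u = 0
        · simp [hFu]
        · exact one_sub_sq_mul_norm_sq_le_norm_inner_sq hx hFu (hS u₀ hu₀S u hu hu₀ hFu)
      _ ≤ ∑ u, ‖⟪x, F u⟫_𝕜‖ ^ 2 * μ u :=
        sum_le_sum_of_subset_of_nonneg (subset_univ S) fun u _ _ =>
          mul_nonneg (sq_nonneg _) (hμ u)
      _ = 1 := by rw [hF.sum_norm_inner_sq_mul, hx, one_pow]
  · push Not at hS₀
    rw [sum_eq_zero fun u hu => by simp [hS₀ u hu]]
    simp

lemma IsOrthonormalCoordinates.sum_norm_sq_mul_le_div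
    (hF : IsOrthonormalCoordinates μ F) (hμ : ∀ u, 0 ≤ μ u) {S : Finset V} {r : ℝ}
    (hr : r ^ 2 < 1)
    (hS : ∀ u ∈ S, ∀ v ∈ S, F u ≠ 0 → F v ≠ 0 →
      phaseDist 𝕜 ((‖F u‖ : 𝕜)⁻¹ • F u) ((‖F v‖ : 𝕜)⁻¹ • F v) ≤ r) :
    ∑ u ∈ S, ‖F u‖ ^ 2 * μ u ≤ (∑ u, ‖F u‖ ^ 2 * μ u) / (Fintype.card ι * (1 - r ^ 2)) := by
  have hμF : ∀ u, 0 ≤ ‖F u‖ ^ 2 * μ u := fun u => mul_nonneg (sq_nonneg _) (hμ u)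
  rcases (Fintype.card ι).eq_zero_or_pos with hι | hι
  · have hSV := sum_le_sum_of_subset_of_nonneg (subset_univ S) fun u _ _ => hμF u
    simpa [hF.sum_norm_sq_mul, hι] using hSV
  · have hspread := hF.one_sub_sq_mul_sum_norm_sq_mul_le_one hμ hS
    have hr' : 0 < 1 - r ^ 2 := by linarith
    rw [hF.sum_norm_sq_mul, le_div_iff₀ (mul_pos (Nat.cast_pos.mpr hι) hr')]
    calc (∑ u ∈ S, ‖F u‖ ^ 2 * μ u) * (Fintype.card ι * (1 - r ^ 2))
        = (Fintype.card ι : ℝ) * ((1 - r ^ 2) * ∑ u ∈ S, ‖F u‖ ^ 2 * μ u) := by ring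
      _ ≤ (Fintype.card ι : ℝ) := mul_le_of_le_one_right (Nat.cast_nonneg _) hspread

end Orthonormal

theorem stmt_15 {V : Type*} [Fintype V] (μ : V → ℝ) (hμ : ∀ u, 0 < μ u)
    (n : ℕ) (f : Fin n → V → ℂ)
    (horth : ∀ i j, ∑ u : V, f i u * (starRingEnd ℂ) (f j u) * (μ u : ℂ) =
      if i = j then 1 else 0)
    (F : V → EuclideanSpace ℂ (Fin n)) (hF : ∀ u p, F u p = f p u)
    (dF : V → V → ℝ)
    (hdF : ∀ u v, dF u v = sInf { x : ℝ | ∃ γ : ℂ, ‖γ‖ = 1 ∧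
      x = ‖(‖F u‖ : ℂ)⁻¹ • F u - γ • ((‖F v‖ : ℂ)⁻¹ • F v)‖ })
    (S : Finset V) (r : ℝ) (hr0 : 0 < r) (hr1 : r < 1)
    (hdiam : ∀ u ∈ S, ∀ v ∈ S, F u ≠ 0 → F v ≠ 0 → dF u v ≤ r) :
    ∑ u ∈ S, ‖F u‖ ^ 2 * μ u ≤ (∑ u : V, ‖F u‖ ^ 2 * μ u) / (n * (1 - r ^ 2)) := by
  have hForth : IsOrthonormalCoordinates μ F := fun i j => by
    simp only [hF]
    exact horth i j
  have hS : ∀ u ∈ S, ∀ v ∈ S, F u ≠ 0 → F v ≠ 0 →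
      phaseDist ℂ ((‖F u‖ : ℂ)⁻¹ • F u) ((‖F v‖ : ℂ)⁻¹ • F v) ≤ r := fun u hu v hv hu₀ hv₀ =>
    (hdF u v).symm.trans_le (hdiam u hu v hv hu₀ hv₀)
  simpa only [Fintype.card_fin] using
    hForth.sum_norm_sq_mul_le_div (fun u => (hμ u).le) (by nlinarith) hS
end
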